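/- arXiv:2504.20318 — 2 statements merged into one kernel-verified Lean document; each statement's English description precedes it below -/
import Mathlib

section
/- Soundness of partial-space search: let ⟨s₀,ρ₀⟩, ⟨s₁,ρ₁⟩, …, ⟨sₙ,ρₙ⟩ be a sequence of partial-space search nodes of a planning task Π in which ⟨s₀,ρ₀⟩ = ⟨s₀,⊥⟩ is the root, each node is a successor of the previous one, ρₙ = ⊥, and G ⊆ sₙ. Then the subsequence of those ρᵢ that are fully instantiated (i.e., ground actions), taken in order, is a valid plan for Π. -/
namespace PS

/-- A lifted planning task: atoms, action schemas with arities, objects,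
preconditions/add/delete effects of ground instantiations, initial state and goal. -/
structure LiftedTask where
  Atom : Type
  Schema : Type
  Obj : Type
  arity : Schema → ℕ
  pre : Schema → List Obj → Set Atom
  add : Schema → List Obj → Set Atom
  del : Schema → List Obj → Set Atom
  init : Set Atom
  goal : Set Atom

/-- A ground action: a schema with a full list of instantiating objects. -/
abbrev GroundAction (T : LiftedTask) :=
  { p : T.Schema × List T.Obj // p.2.length = T.arity p.1 }

/-- A partial action: `none` is ⊥; otherwise a schema with a prefix of instantiating objects. -/
abbrev PartialAction (T : LiftedTask) :=
  Option { p : T.Schema × List T.Obj // p.2.length ≤ T.arity p.1 }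

/-- `a` is applicable in state `s` iff `pre(a) ⊆ s`. -/
def Applicable (T : LiftedTask) (a : GroundAction T) (s : Set T.Atom) : Prop :=
  T.pre a.val.1 a.val.2 ⊆ s

/-- `succ(s,a) = (s \ del(a)) ∪ add(a)`. -/
def applySucc (T : LiftedTask) (s : Set T.Atom) (a : GroundAction T) : Set T.Atom :=
  (s \ T.del a.val.1 a.val.2) ∪ T.add a.val.1 a.val.2

/-- A ground action viewed as a (fully instantiated) partial action. -/
def toPartial (T : LiftedTask) (a : GroundAction T) : PartialAction T :=
  some ⟨a.val, le_of_eq a.prop⟩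

/-- A partial action is fully instantiated iff all schema parameters are instantiated. -/
def isFull (T : LiftedTask) : PartialAction T → Prop
  | none => False
  | some p => p.val.2.length = T.arity p.val.1

/-- `𝒜^ρ`: the set of ground actions in the subtree rooted at `ρ` of the partial action tree. -/
def subtree (T : LiftedTask) : PartialAction T → Set (GroundAction T)
  | none => Set.univ
  | some p => {a : GroundAction T | a.val.1 = p.val.1 ∧ p.val.2 <+: a.val.2}

/-- `ρ` is applicable in `s` iff `𝒜^ρ_s = 𝒜^ρ ∩ 𝒜_s ≠ ∅`. -/
def ApplicableP (T : LiftedTask) (ρ : PartialAction T) (s : Set T.Atom) : Prop :=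
  ∃ a ∈ subtree T ρ, Applicable T a s

/-- The child relation of the partial action tree. -/
def Child (T : LiftedTask) : PartialAction T → PartialAction T → Prop
  | none, some p' => p'.val.2 = []
  | some p, some p' => p.val.1 = p'.val.1 ∧ ∃ o : T.Obj, p'.val.2 = p.val.2 ++ [o]
  | _, none => False

/-- A partial-space search node: a state and a partial action. -/
abbrev Node (T : LiftedTask) := Set T.Atom × PartialAction T

/-- The successor relation of partial-space search. -/
inductive Succ (T : LiftedTask) : Node T → Node T → Prop
  | refine {s : Set T.Atom} {ρ ρ' : PartialAction T} :
      Child T ρ ρ' → ApplicableP T ρ' s → Succ T (s, ρ) (s, ρ')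
  | finish {s : Set T.Atom} (a : GroundAction T) :
      Succ T (s, toPartial T a) (applySucc T s a, (none : PartialAction T))

/-- `IsPlanFrom T s π`: `π` is a valid plan starting from state `s`. -/
inductive IsPlanFrom (T : LiftedTask) : Set T.Atom → List (GroundAction T) → Prop
  | nil {s : Set T.Atom} : T.goal ⊆ s → IsPlanFrom T s []
  | cons {s : Set T.Atom} {a : GroundAction T} {l : List (GroundAction T)} :
      Applicable T a s → IsPlanFrom T (applySucc T s a) l → IsPlanFrom T s (a :: l)

/-- The ground action corresponding to a fully instantiated partial action, if any. -/
def groundOf? (T : LiftedTask) : PartialAction T → Option (GroundAction T)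
  | none => none
  | some p => if h : p.val.2.length = T.arity p.val.1 then some ⟨p.val, h⟩ else none

/-- The ordered subsequence of fully instantiated partial actions in a node sequence. -/
def extractPlan (T : LiftedTask) (l : List (Node T)) : List (GroundAction T) :=
  l.filterMap fun n => groundOf? T n.2

/-- The partial action instantiating the first `j` parameters of the ground action `a`. -/
def prefixPA (T : LiftedTask) (a : GroundAction T) (j : ℕ) : PartialAction T :=
  some ⟨(a.val.1, a.val.2.take j), by
    rw [List.length_take]
    exact (min_le_right _ _).trans a.prop.le⟩

/-- The parent map of the partial action tree (sends ⊥ to ⊥). -/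
def parentPA (T : LiftedTask) : PartialAction T → PartialAction T
  | none => none
  | some p =>
      if p.val.2.isEmpty then none
      else some ⟨(p.val.1, p.val.2.dropLast), by
        rw [List.length_dropLast]
        exact (Nat.sub_le _ _).trans p.prop⟩

/-- Specificity: `0` for ⊥, `j+1` for a partial action with `j` instantiated parameters. -/
def spec (T : LiftedTask) : PartialAction T → ℕ
  | none => 0
  | some p => p.val.2.length + 1

/-- The canonical root-to-goal path obtained by decomposing each plan action into its
chain of partial actions of increasing specificity. -/
def planPath (T : LiftedTask) : Set T.Atom → List (GroundAction T) → List (Node T)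
  | s, [] => [(s, (none : PartialAction T))]
  | s, a :: π =>
      ((s, (none : PartialAction T)) ::
        (List.range (T.arity a.val.1 + 1)).map fun j => (s, prefixPA T a j)) ++
        planPath T (applySucc T s a) π

/-- `ρ` lies on the unique chain from ⊥ to the ground action `a` in the partial action tree. -/
def OnChain (T : LiftedTask) (ρ : PartialAction T) (a : GroundAction T) : Prop :=
  ρ = none ∨ ∃ j ≤ T.arity a.val.1, ρ = prefixPA T a j


lemma subtree_full_eq (T : LiftedTask) (a b : GroundAction T)
    (h : b ∈ subtree T (toPartial T a)) : b = a := by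
  obtain ⟨h1, h2⟩ := h
  apply Subtype.ext
  have hlen : a.val.2.length = b.val.2.length := by
    rw [a.prop, b.prop, h1]
  exact Prod.ext h1 (h2.eq_of_length hlen).symm

lemma groundOf?_eq_none_of_child (T : LiftedTask) {ρ ρ' : PartialAction T}
    (h : Child T ρ ρ') : groundOf? T ρ = none := by
  cases ρ with
  | none => rfl
  | some p =>
    cases ρ' with
    | none => exact absurd h id
    | some p' =>
      obtain ⟨h1, o, h2⟩ := h
      have hp' := p'.prop
      rw [h2, List.length_append, ← h1] at hp'
      simp only [List.length_singleton] at hp'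
      simp only [groundOf?]
      rw [dif_neg]
      omega

lemma groundOf?_toPartial (T : LiftedTask) (a : GroundAction T) :
    groundOf? T (toPartial T a) = some a := by
  simp only [groundOf?, toPartial]
  rw [dif_pos a.prop]

lemma sound_aux (T : LiftedTask) :
    ∀ (ns : List (Node T)) (s : Set T.Atom) (ρ : PartialAction T),
      List.Chain' (Succ T) ((s, ρ) :: ns) →
      (ρ = none ∨ ApplicableP T ρ s) →
      (((s, ρ) :: ns).getLast (by simp)).2 = none →
      T.goal ⊆ (((s, ρ) :: ns).getLast (by simp)).1 →
      IsPlanFrom T s (extractPlan T ((s, ρ) :: ns)) := by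
  intro ns
  induction ns with
  | nil =>
    intro s ρ _ _ hlast hgoal
    simp only [List.getLast_singleton] at hlast hgoal
    subst hlast
    simpa [extractPlan, groundOf?] using IsPlanFrom.nil hgoal
  | cons n tl ih =>
    intro s ρ hch happ hlast hgoal
    obtain ⟨hsucc, hch'⟩ := List.isChain_cons_cons.mp hch
    rw [List.getLast_cons (by simp : n :: tl ≠ [])] at hlast hgoal
    cases hsucc with
    | refine hc ha =>
      rename_i ρ'
      have h0 : groundOf? T ρ = none := groundOf?_eq_none_of_child T hc
      have : extractPlan T ((s, ρ) :: (s, ρ') :: tl)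
          = extractPlan T ((s, ρ') :: tl) := by
        simp [extractPlan, h0]
      rw [this]
      exact ih s ρ' hch' (Or.inr ha) hlast hgoal
    | finish a =>
      have happl : Applicable T a s := by
        rcases happ with h | ⟨b, hb1, hb2⟩
        · exact absurd h (by simp [toPartial])
        · rwa [subtree_full_eq T a b hb1] at hb2
      have : extractPlan T ((s, toPartial T a) :: (applySucc T s a, none) :: tl)
          = a :: extractPlan T ((applySucc T s a, none) :: tl) := by
        simp [extractPlan, groundOf?_toPartial]
      rw [this]
      exact IsPlanFrom.cons happl
        (ih (applySucc T s a) none hch' (Or.inl rfl) hlast hgoal)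

/-- **Soundness of partial-space search** (Theorem 1, soundness part). -/
theorem partial_space_search_sound (T : LiftedTask) (ns : List (Node T)) (hne : ns ≠ [])
    (hchain : List.Chain' (Succ T) ns)
    (hroot : ns.head hne = (T.init, (none : PartialAction T)))
    (hlast : (ns.getLast hne).2 = (none : PartialAction T))
    (hgoal : T.goal ⊆ (ns.getLast hne).1) :
    IsPlanFrom T T.init (extractPlan T ns) := by
  cases ns with
  | nil => exact absurd rfl hne
  | cons n tl =>
    simp only [List.head_cons] at hroot
    subst hroot
    exact sound_aux T tl T.init none hchain (Or.inl rfl) hlast hgoal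

end PS
end

section
/- Combined correctness of partial-space search: a planning task Π has a valid plan if and only if there exists a sequence of partial-space search nodes starting at the root ⟨s₀,⊥⟩, in which each node is a successor of the previous one, ending at a node ⟨s,⊥⟩ with G ⊆ s. -/
namespace PS

/-! Along a search path every node reached by a refinement step is applicable, so every
expansion step fires a ground action applicable in its state: the subtree of a fully
instantiated partial action consists of that action alone. Conversely, each action of a plan
is reached from `⊥` by instantiating its parameters one at a time, every prefix being
applicable because the action itself lies in its subtree. -/

theorem _root_.List.exists_isChain_head_getLast_iff {α : Type*} {r : α → α → Prop} {a : α}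
    {p : α → Prop} :
    (∃ (l : List α) (hl : l ≠ []), l.IsChain r ∧ l.head hl = a ∧ p (l.getLast hl)) ↔
      ∃ b, Relation.ReflTransGen r a b ∧ p b := by
  constructor
  · rintro ⟨l, hl, hchain, rfl, hp⟩
    exact ⟨_, List.relationReflTransGen_of_exists_isChain l hchain hl, hp⟩
  · rintro ⟨b, hab, hp⟩
    obtain ⟨l, hl, hchain, hhead, rfl⟩ := List.exists_isChain_ne_nil_of_relationReflTransGen hab
    exact ⟨l, hl, hchain, hhead, hp⟩

def IsGoalNode (T : LiftedTask) (n : Node T) : Prop :=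
  n.2 = none ∧ T.goal ⊆ n.1

def IsApplicableNode (T : LiftedTask) (n : Node T) : Prop :=
  n.2 = none ∨ ApplicableP T n.2 n.1

variable {T : LiftedTask}

theorem applicable_of_applicableP_toPartial {a : GroundAction T} {s : Set T.Atom}
    (h : ApplicableP T (toPartial T a) s) : Applicable T a s := by
  obtain ⟨b, ⟨hschema, hprefix⟩, hb⟩ := h
  have hlen : a.val.2.length = b.val.2.length := by rw [a.prop, b.prop, hschema]
  obtain rfl : a = b := Subtype.ext (Prod.ext hschema.symm (hprefix.eq_of_length hlen))
  exact hb

theorem Succ.isApplicableNode {n m : Node T} (h : Succ T n m) : IsApplicableNode T m := by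
  cases h with
  | refine _ happ => exact Or.inr happ
  | finish a => exact Or.inl rfl

theorem exists_isPlanFrom_of_reflTransGen {n g : Node T}
    (hreach : Relation.ReflTransGen (Succ T) n g) (hgoal : IsGoalNode T g)
    (happ : IsApplicableNode T n) : ∃ π, IsPlanFrom T n.1 π := by
  induction hreach using Relation.ReflTransGen.head_induction_on with
  | refl => exact ⟨[], .nil hgoal.2⟩
  | head hstep _ ih =>
    obtain ⟨π, hπ⟩ := ih hstep.isApplicableNode
    cases hstep with
    | refine => exact ⟨π, hπ⟩
    | finish a =>
      have ha := applicable_of_applicableP_toPartial (happ.resolve_left (Option.some_ne_none _))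
      exact ⟨a :: π, .cons ha hπ⟩

theorem prefixPA_arity (a : GroundAction T) :
    prefixPA T a (T.arity a.val.1) = toPartial T a := by
  simp only [prefixPA, toPartial, ← a.prop, List.take_length]

theorem child_prefixPA_succ (a : GroundAction T) {j : ℕ} (hj : j < T.arity a.val.1) :
    Child T (prefixPA T a j) (prefixPA T a (j + 1)) := by
  have hj' : j < a.val.2.length := a.prop ▸ hj
  exact ⟨rfl, a.val.2[j], List.take_succ_eq_append_getElem hj'⟩

theorem applicableP_prefixPA {a : GroundAction T} {s : Set T.Atom} (ha : Applicable T a s)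
    (j : ℕ) : ApplicableP T (prefixPA T a j) s :=
  ⟨a, ⟨rfl, List.take_prefix _ _⟩, ha⟩

theorem reflTransGen_succ_prefixPA {a : GroundAction T} {s : Set T.Atom} (ha : Applicable T a s)
    {j : ℕ} (hj : j ≤ T.arity a.val.1) :
    Relation.ReflTransGen (Succ T) (s, none) (s, prefixPA T a j) := by
  induction j with
  | zero => exact .single (.refine rfl (applicableP_prefixPA ha 0))
  | succ j ih =>
    exact (ih (by omega)).tail
      (.refine (child_prefixPA_succ a (by omega)) (applicableP_prefixPA ha (j + 1)))

theorem IsPlanFrom.exists_reflTransGen_isGoalNode {s : Set T.Atom} {π : List (GroundAction T)}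
    (h : IsPlanFrom T s π) :
    ∃ g, Relation.ReflTransGen (Succ T) (s, none) g ∧ IsGoalNode T g := by
  induction h with
  | nil hgoal => exact ⟨_, .refl, rfl, hgoal⟩
  | @cons s a _ ha _ ih =>
    obtain ⟨g, hreach, hgoal⟩ := ih
    have hexpand : Relation.ReflTransGen (Succ T) (s, none) (s, toPartial T a) :=
      prefixPA_arity a ▸ reflTransGen_succ_prefixPA ha le_rfl
    exact ⟨g, (hexpand.tail (.finish a)).trans hreach, hgoal⟩

/-- **Combined correctness of partial-space search**: a planning task has a valid plan iff
partial-space search can reach a goal node `⟨s,⊥⟩` with `G ⊆ s` from the root `⟨s₀,⊥⟩`. -/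
theorem partial_space_search_correct (T : LiftedTask) :
    (∃ π : List (GroundAction T), IsPlanFrom T T.init π) ↔
    (∃ (ns : List (Node T)) (hne : ns ≠ []),
      List.Chain' (Succ T) ns ∧
      ns.head hne = (T.init, (none : PartialAction T)) ∧
      (ns.getLast hne).2 = (none : PartialAction T) ∧
      T.goal ⊆ (ns.getLast hne).1) := by
  refine Iff.trans ?_ (List.exists_isChain_head_getLast_iff (p := IsGoalNode T)).symm
  constructor
  · rintro ⟨π, hπ⟩
    exact hπ.exists_reflTransGen_isGoalNode
  · rintro ⟨g, hreach, hgoal⟩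
    exact exists_isPlanFrom_of_reflTransGen hreach hgoal (Or.inl rfl)

end PS
end
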